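/- arXiv:1701.04951 — 3 statements merged into one kernel-verified Lean document; each statement's English description precedes it below -/
import Mathlib

section
/- Let g : Mor(G) → ℂ be a function and suppose that for every finitely supported function f : Mor(G) → ℂ and all morphisms p, p' of G with t(p) = t(p'), one has ∑_{u : t(u) = s(p)} g(u)·f(pu) = ∑_{u : t(u) = s(p')} g(u)·f(p'u) (i.e. the functional φ_g(f) = ∑_{u} g(u)·f(u) is left invariant). Then g(u) = g(u') whenever s(u) = s(u'). -/
open CategoryTheory

/-- The set of all morphisms of a groupoid `G`. -/
def Mor (G : Type*) [Groupoid G] := Σ X Y : G, X ⟶ Y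

namespace Mor

variable {G : Type*} [Groupoid G]

/-- The source of a morphism. -/
def src (p : Mor G) : G := p.1

/-- The target of a morphism. -/
def tgt (p : Mor G) : G := p.2.1

/-- The composition `p q` (first `q`, then `p`), defined when `s(p) = t(q)`;
it satisfies `s(pq) = s(q)` and `t(pq) = t(p)`. -/
def comp (p q : Mor G) (h : src p = tgt q) : Mor G :=
  ⟨q.1, p.2.1, q.2.2 ≫ eqToHom h.symm ≫ p.2.2⟩

/-- The inverse of a morphism. -/
def inv (p : Mor G) : Mor G := ⟨p.2.1, p.1, Groupoid.inv p.2.2⟩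

/-- The identity morphism at an object `X`. -/
def idm (X : G) : Mor G := ⟨X, X, 𝟙 X⟩

end Mor

lemma comp_inv_eq_idm {G : Type*} [Groupoid G] (u v : Mor G)
    (h : Mor.src (Mor.inv u) = Mor.tgt v) :
    Mor.comp (Mor.inv u) v h = Mor.idm (Mor.src u) ↔ v = u := by
  obtain ⟨a, b, q⟩ := v
  obtain ⟨c, d, r⟩ := u
  simp only [Mor.src, Mor.inv, Mor.tgt] at h
  subst h
  simp only [Mor.comp, Mor.inv, Mor.idm, Mor.src, eqToHom_refl, Category.id_comp]
  constructor
  · intro heq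
    obtain ⟨h1, h2⟩ := Sigma.mk.inj_iff.mp heq
    subst h1
    obtain ⟨h3, h4⟩ := Sigma.mk.inj_iff.mp (eq_of_heq h2)
    have h5 := eq_of_heq h4
    have : q = r := by
      have := congrArg (· ≫ r) h5
      simp at this
      erw [eqToHom_refl, Category.comp_id] at this
      exact this
    subst this
    rfl
  · intro heq
    obtain ⟨h1, h2⟩ := Sigma.mk.inj_iff.mp heq
    subst h1
    obtain ⟨h3, h4⟩ := Sigma.mk.inj_iff.mp (eq_of_heq h2)
    have h5 := eq_of_heq h4
    subst h5
    erw [eqToHom_refl, Category.id_comp]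
    simp
    rfl


/-- If `g : Mor(G) → ℂ` is such that the functional `φ_g(f) = ∑_u g(u)·f(u)` is left
invariant, i.e. for every finitely supported `f` and all morphisms `p, p'` with
`t(p) = t(p')` one has `∑_{u : t(u)=s(p)} g(u)·f(pu) = ∑_{u : t(u)=s(p')} g(u)·f(p'u)`,
then `g(u) = g(u')` whenever `s(u) = s(u')`. -/
theorem statement_1 {G : Type*} [Groupoid G] (g : Mor G → ℂ)
    (hg : ∀ f : Mor G → ℂ, (Function.support f).Finite → ∀ p p' : Mor G,
      Mor.tgt p = Mor.tgt p' →
      (∑ᶠ u : {u : Mor G // Mor.tgt u = Mor.src p},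
          g u.1 * f (Mor.comp p u.1 u.2.symm))
        = ∑ᶠ u : {u : Mor G // Mor.tgt u = Mor.src p'},
            g u.1 * f (Mor.comp p' u.1 u.2.symm)) :
    ∀ u u' : Mor G, Mor.src u = Mor.src u' → g u = g u' := by
  intro u u' hs
  classical
  set f : Mor G → ℂ := fun m => if m = Mor.idm (Mor.src u) then 1 else 0 with hfdef
  have hfin : (Function.support f).Finite := by
    apply Set.Finite.subset (Set.finite_singleton (Mor.idm (Mor.src u)))
    intro m hm
    simp only [Function.mem_support, hfdef] at hm
    by_contra hne
    simp only [Set.mem_singleton_iff] at hne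
    simp [hne] at hm
  have htp : Mor.tgt (Mor.inv u) = Mor.tgt (Mor.inv u') := hs
  have H := hg f hfin (Mor.inv u) (Mor.inv u') htp
  have hL : (∑ᶠ v : {v : Mor G // Mor.tgt v = Mor.src (Mor.inv u)},
      g v.1 * f (Mor.comp (Mor.inv u) v.1 v.2.symm)) = g u := by
    rw [finsum_eq_single _ (⟨u, rfl⟩ : {v : Mor G // Mor.tgt v = Mor.src (Mor.inv u)})]
    · have : Mor.comp (Mor.inv u) u rfl = Mor.idm (Mor.src u) :=
        (comp_inv_eq_idm u u rfl).mpr rfl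
      simp [hfdef, this]
    · rintro ⟨v, hv⟩ hne
      have hvne : v ≠ u := fun h => hne (Subtype.ext h)
      have : Mor.comp (Mor.inv u) v hv.symm ≠ Mor.idm (Mor.src u) := fun h =>
        hvne ((comp_inv_eq_idm u v hv.symm).mp h)
      simp [hfdef, this]
  have hR : (∑ᶠ v : {v : Mor G // Mor.tgt v = Mor.src (Mor.inv u')},
      g v.1 * f (Mor.comp (Mor.inv u') v.1 v.2.symm)) = g u' := by
    rw [finsum_eq_single _ (⟨u', rfl⟩ : {v : Mor G // Mor.tgt v = Mor.src (Mor.inv u')})]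
    · have : Mor.comp (Mor.inv u') u' rfl = Mor.idm (Mor.src u') :=
        (comp_inv_eq_idm u' u' rfl).mpr rfl
      rw [this, ← hs]
      simp [hfdef]
    · rintro ⟨v, hv⟩ hne
      have hvne : v ≠ u' := fun h => hne (Subtype.ext h)
      have h1 : Mor.comp (Mor.inv u') v hv.symm ≠ Mor.idm (Mor.src u') := fun h =>
        hvne ((comp_inv_eq_idm u' v hv.symm).mp h)
      have h2 : Mor.comp (Mor.inv u') v hv.symm ≠ Mor.idm (Mor.src u) := by
        rw [hs]; exact h1
      simp [hfdef, h2]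
  rw [hL, hR] at H
  exact H
end

section
/- Let h : Mor(G) → ℂ be a function and suppose that for every finitely supported function f : Mor(G) → ℂ and all morphisms q, q' of G with s(q) = s(q'), one has ∑_{v : s(v) = t(q)} h(v)·f(vq) = ∑_{v : s(v) = t(q')} h(v)·f(vq') (i.e. the functional ψ_h(f) = ∑_{v} h(v)·f(v) is right invariant). Then h(v) = h(v') whenever t(v) = t(v'). -/
open CategoryTheory

lemma comp_inv_eq_idm_iff {G : Type*} [Groupoid G] (v u : Mor G)
    (hu : Mor.src u = Mor.tgt (Mor.inv v)) :
    Mor.comp u (Mor.inv v) hu = Mor.idm (Mor.tgt v) ↔ u = v := by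
  constructor
  · intro he
    obtain ⟨A, B, g⟩ := u
    obtain ⟨C, D, w⟩ := v
    have hAC : A = C := hu
    subst hAC
    have h1 : (⟨D, B, Groupoid.inv w ≫ eqToHom rfl ≫ g⟩ : Mor G) = ⟨D, D, 𝟙 D⟩ := he
    have h2 : (⟨B, Groupoid.inv w ≫ eqToHom rfl ≫ g⟩ : Σ Y : G, D ⟶ Y) = ⟨D, 𝟙 D⟩ :=
      eq_of_heq (Sigma.ext_iff.mp h1).2
    have hBD : B = D := (Sigma.ext_iff.mp h2).1
    subst hBD
    have h3 : Groupoid.inv w ≫ eqToHom rfl ≫ g = 𝟙 B := eq_of_heq (Sigma.ext_iff.mp h2).2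
    simp only [eqToHom_refl, Category.id_comp] at h3
    have hg : g = w := by
      have := congrArg (fun x => w ≫ x) h3
      simpa [← Category.assoc] using this
    rw [hg]
  · rintro rfl
    obtain ⟨A, B, g⟩ := u
    show (⟨B, B, Groupoid.inv g ≫ eqToHom (rfl : A = A) ≫ g⟩ : Mor G) = ⟨B, B, 𝟙 B⟩
    simp [Mor.comp, Mor.inv, Mor.idm, Mor.tgt]

/-- If `h : Mor(G) → ℂ` is such that the functional `ψ_h(f) = ∑_v h(v)·f(v)` is right
invariant, i.e. for every finitely supported `f` and all morphisms `q, q'` with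
`s(q) = s(q')` one has `∑_{v : s(v)=t(q)} h(v)·f(vq) = ∑_{v : s(v)=t(q')} h(v)·f(vq')`,
then `h(v) = h(v')` whenever `t(v) = t(v')`. -/
theorem statement_3 {G : Type*} [Groupoid G] (h : Mor G → ℂ)
    (hh : ∀ f : Mor G → ℂ, (Function.support f).Finite → ∀ q q' : Mor G,
      Mor.src q = Mor.src q' →
      (∑ᶠ v : {v : Mor G // Mor.src v = Mor.tgt q},
          h v.1 * f (Mor.comp v.1 q v.2))
        = ∑ᶠ v : {v : Mor G // Mor.src v = Mor.tgt q'},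
            h v.1 * f (Mor.comp v.1 q' v.2)) :
    ∀ v v' : Mor G, Mor.tgt v = Mor.tgt v' → h v = h v' := by
  intro v v' htt
  classical
  set X := Mor.tgt v with hX
  set f : Mor G → ℂ := fun w => if w = Mor.idm X then 1 else 0 with hf
  have hsupp : (Function.support f).Finite := by
    apply Set.Finite.subset (Set.finite_singleton (Mor.idm X))
    intro w hw
    by_contra hne
    exact hw (if_neg hne)
  have key : ∀ u : Mor G, Mor.tgt u = X →
      (∑ᶠ w : {w : Mor G // Mor.src w = Mor.tgt (Mor.inv u)},
        h w.1 * f (Mor.comp w.1 (Mor.inv u) w.2)) = h u := by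
    intro u htu
    have hsrc : Mor.src u = Mor.tgt (Mor.inv u) := rfl
    rw [finsum_eq_single _ (⟨u, hsrc⟩ : {w : Mor G // Mor.src w = Mor.tgt (Mor.inv u)})]
    · have : Mor.comp u (Mor.inv u) hsrc = Mor.idm X := by
        rw [← htu]
        exact (comp_inv_eq_idm_iff u u hsrc).mpr rfl
      rw [this]
      simp [hf]
    · intro x hx
      have hne : Mor.comp x.1 (Mor.inv u) x.2 ≠ Mor.idm X := by
        rw [← htu]
        intro hc
        exact hx (Subtype.ext ((comp_inv_eq_idm_iff u x.1 x.2).mp hc))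
      simp [hf, if_neg hne]
  have := hh f hsupp (Mor.inv v) (Mor.inv v')
    (by simpa [Mor.src, Mor.inv, Mor.tgt, hX] using htt)
  rw [key v rfl, key v' htt.symm] at this
  exact this
end

section
/- The linear functional φ̂ : ℂG → ℂ defined by φ̂(b) = ∑_{X object of G} b(id_X) is a faithful functional on the groupoid algebra: if b ∈ ℂG satisfies φ̂(a*b) = 0 for all a ∈ ℂG, then b = 0; and if b ∈ ℂG satisfies φ̂(b*a) = 0 for all a ∈ ℂG, then b = 0. -/
open CategoryTheory

open scoped Classical in
/-- The indicator function `δ_p` of a morphism `p`. -/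
noncomputable def delta {G : Type*} [Groupoid G] (p : Mor G) : Mor G → ℂ :=
  fun r => if r = p then 1 else 0

/-- The convolution product on the groupoid algebra `ℂG`:
`(a*b)(r) = ∑_{(p,q) : s(p)=t(q), pq = r} a(p)·b(q)`. -/
noncomputable def conv {G : Type*} [Groupoid G] (a b : Mor G → ℂ) : Mor G → ℂ :=
  fun r =>
    ∑ᶠ (p : Mor G) (q : Mor G) (h : Mor.src p = Mor.tgt q) (_ : Mor.comp p q h = r),
      a p * b q

/-- The functional `φ̂(b) = ∑_X b(id_X)` on the groupoid algebra `ℂG`. -/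
noncomputable def phihat {G : Type*} [Groupoid G] (b : Mor G → ℂ) : ℂ :=
  ∑ᶠ X : G, b (Mor.idm X)

section Aux
open scoped Classical
variable {G : Type*} [Groupoid G]

lemma key_aux (p q : Mor G) (h : Mor.src p = Mor.tgt q) (X : G)
    (he : Mor.comp p q h = Mor.idm X) :
    q = Mor.inv p ∧ p = Mor.inv q ∧ X = p.2.1 ∧ X = q.1 := by
  obtain ⟨C, D, f⟩ := p
  obtain ⟨A, B, g⟩ := q
  dsimp [Mor.src, Mor.tgt] at h
  subst h
  dsimp [Mor.comp, Mor.idm] at he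
  obtain ⟨rfl, h2⟩ := Sigma.mk.inj_iff.mp he
  obtain ⟨rfl, h3⟩ := Sigma.mk.inj_iff.mp (eq_of_heq h2)
  have h4 := eq_of_heq h3
  erw [eqToHom_refl, Category.id_comp] at h4
  have hg : g = Groupoid.inv f := by
    rw [← Category.comp_id g, ← Groupoid.comp_inv f, ← Category.assoc, h4, Category.id_comp]
  have hf : f = Groupoid.inv g := by
    rw [← Category.id_comp f, ← Groupoid.inv_comp g, Category.assoc, h4, Category.comp_id]
  exact ⟨by simp [Mor.inv, hg]; exact rfl, by simp [Mor.inv, hf]; exact rfl, rfl, rfl⟩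

lemma comp_inv_aux (p : Mor G) (h : Mor.src p = Mor.tgt (Mor.inv p)) :
    Mor.comp p (Mor.inv p) h = Mor.idm p.2.1 := by
  obtain ⟨C, D, f⟩ := p
  simp [Mor.comp, Mor.inv, Mor.idm]
  exact Sigma.ext rfl (heq_of_eq (Sigma.ext rfl (heq_of_eq (by erw [eqToHom_refl, Category.id_comp]; exact IsIso.inv_hom_id f))))

lemma inv_comp_aux (p : Mor G) (h : Mor.src (Mor.inv p) = Mor.tgt p) :
    Mor.comp (Mor.inv p) p h = Mor.idm p.1 := by
  obtain ⟨C, D, f⟩ := p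
  simp [Mor.comp, Mor.inv, Mor.idm]
  exact Sigma.ext rfl (heq_of_eq (Sigma.ext rfl (heq_of_eq (by erw [eqToHom_refl, Category.id_comp]; exact IsIso.hom_inv_id f))))

lemma inv_inv_aux (p : Mor G) : Mor.inv (Mor.inv p) = p := by
  obtain ⟨C, D, f⟩ := p
  simp [Mor.inv]
  exact rfl

lemma idm_inj {X Y : G} (h : Mor.idm X = Mor.idm Y) : X = Y :=
  congrArg (fun s : Mor G => s.1) h

lemma delta_support (p : Mor G) : (Function.support (delta p)).Finite := by
  apply Set.Finite.subset (Set.finite_singleton p)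
  intro x hx
  by_contra h
  apply hx
  simp only [delta]
  rw [if_neg (fun he => h (by simp [he]))]

lemma phihat_conv_delta (p₀ : Mor G) (b : Mor G → ℂ) :
    phihat (conv (delta p₀) b) = b (Mor.inv p₀) := by
  have hconv : ∀ r, conv (delta p₀) b r
      = ∑ᶠ (q : Mor G) (h : Mor.src p₀ = Mor.tgt q) (_ : Mor.comp p₀ q h = r), b q := by
    intro r
    simp only [conv]
    rw [finsum_eq_single _ p₀ ?_]
    · simp [delta]
    · intro x hx
      simp [delta, hx]
  have hF : ∀ X : G, conv (delta p₀) b (Mor.idm X)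
      = if p₀.2.1 = X then b (Mor.inv p₀) else 0 := by
    intro X
    rw [hconv]
    rw [finsum_eq_single _ (Mor.inv p₀) ?_]
    · rw [finsum_eq_dif, dif_pos (show Mor.src p₀ = Mor.tgt (Mor.inv p₀) from rfl), finsum_eq_if, comp_inv_aux]
      by_cases hX : p₀.2.1 = X
      · subst hX; rw [if_pos rfl, if_pos rfl]
      · rw [if_neg (fun hc => hX (idm_inj hc)), if_neg hX]
    · intro q hq
      rw [finsum_eq_dif]
      split_ifs with h
      · rw [finsum_eq_if, if_neg]
        intro hc
        exact hq (key_aux p₀ q h X hc).1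
      · rfl
  simp only [phihat]
  rw [finsum_eq_single _ p₀.2.1]
  · rw [hF, if_pos rfl]
  · intro X hX
    rw [hF, if_neg (fun h => hX h.symm)]

lemma phihat_delta_conv (q₀ : Mor G) (b : Mor G → ℂ) :
    phihat (conv b (delta q₀)) = b (Mor.inv q₀) := by
  have hconv : ∀ r, conv b (delta q₀) r
      = ∑ᶠ (p : Mor G) (h : Mor.src p = Mor.tgt q₀) (_ : Mor.comp p q₀ h = r), b p := by
    intro r
    simp only [conv]
    refine finsum_congr fun p => ?_
    rw [finsum_eq_single _ q₀ ?_]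
    · simp [delta]
    · intro x hx
      simp [delta, hx]
  have hF : ∀ X : G, conv b (delta q₀) (Mor.idm X)
      = if q₀.1 = X then b (Mor.inv q₀) else 0 := by
    intro X
    rw [hconv]
    rw [finsum_eq_single _ (Mor.inv q₀) ?_]
    · rw [finsum_eq_dif, dif_pos (show Mor.src (Mor.inv q₀) = Mor.tgt q₀ from rfl), finsum_eq_if, inv_comp_aux]
      by_cases hX : q₀.1 = X
      · subst hX; rw [if_pos rfl, if_pos rfl]
      · rw [if_neg (fun hc => hX (idm_inj hc)), if_neg hX]
    · intro p hp
      rw [finsum_eq_dif]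
      split_ifs with h
      · rw [finsum_eq_if, if_neg]
        intro hc
        exact hp (key_aux p q₀ h X hc).2.1
      · rfl
  simp only [phihat]
  rw [finsum_eq_single _ q₀.1]
  · rw [hF, if_pos rfl]
  · intro X hX
    rw [hF, if_neg (fun h => hX h.symm)]

end Aux

/-- The functional `φ̂(b) = ∑_X b(id_X)` is faithful on the groupoid algebra `ℂG`:
if `φ̂(a*b) = 0` for all `a ∈ ℂG` then `b = 0`, and if `φ̂(b*a) = 0` for all `a ∈ ℂG`
then `b = 0`. -/


theorem statement_11 {G : Type*} [Groupoid G]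
    (b : Mor G → ℂ) (hb : (Function.support b).Finite) :
    ((∀ a : Mor G → ℂ, (Function.support a).Finite → phihat (conv a b) = 0) → b = 0) ∧
    ((∀ a : Mor G → ℂ, (Function.support a).Finite → phihat (conv b a) = 0) → b = 0) := by
  constructor
  · intro h
    funext p
    have := h (delta (Mor.inv p)) (delta_support _)
    rw [phihat_conv_delta, inv_inv_aux] at this
    simpa using this
  · intro h
    funext p
    have := h (delta (Mor.inv p)) (delta_support _)
    rw [phihat_delta_conv, inv_inv_aux] at this
    simpa using this
end
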